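/- Let k and M be integers with k ≥ 2M, and let G be a finite simple graph with Δ(G) ≤ k such that the square of every proper subgraph of G is list (k+1)-colorable. Suppose G contains a vertex u with 3 ≤ d(u) ≤ M whose neighbourhood consists of distinct vertices v₁, …, v_{d(u)−2}, x, y, where each vᵢ has degree 2 and the neighbour wᵢ of vᵢ other than u satisfies d(wᵢ) ≤ M, and where d(x) + d(y) ≤ k − M + 2. Then the square of G is list (k+1)-colorable. -/

import Mathlib

open SimpleGraph

def SimpleGraph.square {V : Type*} (G : SimpleGraph V) : SimpleGraph V where
  Adj u v := u ≠ v ∧ (G.Adj u v ∨ ∃ w, G.Adj u w ∧ G.Adj w v)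
  symm := ⟨by
    rintro u v ⟨h, hadj | ⟨w, h1, h2⟩⟩
    · exact ⟨Ne.symm h, Or.inl hadj.symm⟩
    · exact ⟨Ne.symm h, Or.inr ⟨w, h2.symm, h1.symm⟩⟩⟩
  loopless := ⟨fun v h => h.1 rfl⟩

/-- `G` is list `k`-colorable. -/
def SimpleGraph.IsListColorable {V : Type*} (G : SimpleGraph V) (k : ℕ) : Prop :=
  ∀ L : V → Finset ℕ, (∀ v, (L v).card = k) →
    ∃ c : V → ℕ, (∀ v, c v ∈ L v) ∧ ∀ u v, G.Adj u v → c u ≠ c v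

noncomputable def deg {V : Type*} (G : SimpleGraph V) (v : V) : ℕ :=
  (G.neighborSet v).ncard

noncomputable def maxDeg {V : Type*} [Fintype V] (G : SimpleGraph V) : ℕ :=
  Finset.univ.sup (deg G)

noncomputable def chi2l {V : Type*} (G : SimpleGraph V) : ℕ :=
  sInf {k | (G.square).IsListColorable k}

def madLT {V : Type*} (G : SimpleGraph V) (m : ℝ) : Prop :=
  ∀ H : G.Subgraph, H.verts.Nonempty →
    2 * (H.edgeSet.ncard : ℝ) < m * (H.verts.ncard : ℝ)

/-!
Delete one of the degree-two neighbours `v₀` of `u`. Besides `u` it has only one neighbour, so no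
square adjacency between vertices other than `u` and the `vᵢ` passes through `v₀`, and the list
colouring of the smaller square given by minimality is proper on those vertices. Recolour the rest
greedily: first `u`, whose square neighbours other than the `vᵢ` are `x`, `y`, their other
neighbours and the `wᵢ`, at most `d(x) + d(y) + d(u) - 2 ≤ k` vertices; then the `vᵢ` one by one,
each seeing `u`, the earlier `vⱼ`, `x`, `y`, `wᵢ` and the at most `M - 1` other neighbours of `wᵢ`,
at most `2M ≤ k` coloured vertices in all.
-/

open Finset

lemma deg_eq_degree {V : Type*} (G : SimpleGraph V) [Fintype V] [DecidableRel G.Adj] (a : V) :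
    deg G a = G.degree a := by
  rw [deg, Set.ncard_eq_toFinset_card', ← card_neighborSet_eq_degree, Set.toFinset_card]

lemma card_insert_erase_neighborFinset {V : Type*} [DecidableEq V] (G : SimpleGraph V)
    [G.LocallyFinite] {a z : V} (h : G.Adj a z) :
    #(insert z ((G.neighborFinset z).erase a)) = G.degree z := by
  rw [card_insert_of_notMem (by simp), card_erase_of_mem (by simpa using h.symm),
    card_neighborFinset_eq_degree,
    Nat.sub_add_cancel ((G.degree_pos_iff_exists_adj z).2 ⟨a, h.symm⟩)]

theorem exists_listColoring_extend {V : Type*} (Γ : SimpleGraph V) (L : V → Finset ℕ) {n : ℕ}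
    (s : Fin n → V) (T : Fin n → Finset V) {c₀ : V → ℕ}
    (hc₀L : ∀ a, a ∉ Set.range s → c₀ a ∈ L a)
    (hc₀ : ∀ a b, Γ.Adj a b → a ∉ Set.range s → b ∉ Set.range s → c₀ a ≠ c₀ b)
    (hT : ∀ i b, Γ.Adj (s i) b → b ∉ Set.range s → b ∈ T i)
    (hcard : ∀ i, #(T i) + i < #(L (s i))) :
    ∃ c : V → ℕ, (∀ a, c a ∈ L a) ∧ ∀ a b, Γ.Adj a b → c a ≠ c b := by
  induction n generalizing c₀ with
  | zero => exact ⟨c₀, fun a => hc₀L a (by simp), fun a b h => hc₀ a b h (by simp) (by simp)⟩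
  | succ n ih =>
    classical
    obtain ⟨col, hcolL, hcolT⟩ : ∃ col ∈ L (s 0), col ∉ (T 0).image c₀ :=
      exists_mem_notMem_of_card_lt_card ((card_image_le).trans_lt (by simpa using hcard 0))
    have hrange : ∀ b, b ∉ Set.range (Fin.tail s) → b ≠ s 0 → b ∉ Set.range s := by
      rw [Fin.range_fin_succ]
      rintro b hb hb0 (rfl | hb')
      exacts [hb0 rfl, hb hb']
    have hcol : ∀ b, Γ.Adj (s 0) b → b ∉ Set.range (Fin.tail s) → c₀ b ≠ col := fun b h hb hbc =>
      hcolT (hbc ▸ mem_image_of_mem c₀ (hT 0 b h (hrange b hb h.ne.symm)))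
    refine ih (Fin.tail s) (fun i => insert (s 0) (T i.succ)) (c₀ := Function.update c₀ (s 0) col)
      ?_ ?_ ?_ ?_
    · intro a ha
      rcases eq_or_ne a (s 0) with rfl | ha0
      · simpa using hcolL
      · simpa [Function.update_of_ne ha0] using hc₀L a (hrange a ha ha0)
    · intro a b h ha hb
      rcases eq_or_ne a (s 0) with rfl | ha0 <;> rcases eq_or_ne b (s 0) with rfl | hb0
      · exact absurd h Γ.irrefl
      · simpa [Function.update_of_ne hb0] using (hcol b h hb).symm
      · simpa [Function.update_of_ne ha0] using hcol a h.symm ha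
      · simpa [Function.update_of_ne ha0, Function.update_of_ne hb0] using
          hc₀ a b h (hrange a ha ha0) (hrange b hb hb0)
    · intro i b h hb
      rcases eq_or_ne b (s 0) with rfl | hb0
      · exact mem_insert_self _ _
      · exact mem_insert_of_mem (hT i.succ b h (hrange b hb hb0))
    · intro i
      have := hcard i.succ
      have := card_insert_le (s 0) (T i.succ)
      simp only [Fin.val_succ, Fin.tail] at *
      omega

lemma exists_coloring_of_deleteVerts {V : Type*} (G : SimpleGraph V) (w : V) {m : ℕ}
    (hcol : ((⊤ : G.Subgraph).deleteVerts {w}).coe.square.IsListColorable m)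
    (L : V → Finset ℕ) (hL : ∀ a, #(L a) = m) :
    ∃ c : V → ℕ, (∀ a, a ≠ w → c a ∈ L a) ∧
      ∀ a b, G.square.Adj a b → a ≠ w → b ≠ w → ¬(G.Adj w a ∧ G.Adj w b) → c a ≠ c b := by
  classical
  have hverts : ∀ a, a ∈ ((⊤ : G.Subgraph).deleteVerts {w}).verts ↔ a ≠ w := by simp
  obtain ⟨c', hc'L, hc'⟩ := hcol (fun a => L a) (fun a => hL a)
  refine ⟨fun a => if h : a ≠ w then c' ⟨a, (hverts a).2 h⟩ else 0, fun a ha => ?_, ?_⟩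
  · simpa [ha] using hc'L ⟨a, (hverts a).2 ha⟩
  · rintro a b ⟨hab, hadj⟩ ha hb hw
    dsimp only
    rw [dif_pos ha, dif_pos hb]
    refine hc' _ _ ⟨fun h => hab (congrArg Subtype.val h), ?_⟩
    rcases hadj with hadj | ⟨z, haz, hzb⟩
    · exact Or.inl (by simpa [ha, hb] using hadj)
    · have hz : z ≠ w := by rintro rfl; exact hw ⟨haz.symm, hzb⟩
      exact Or.inr ⟨⟨z, (hverts z).2 hz⟩, by simpa [ha, hz] using haz, by simpa [hb, hz] using hzb⟩

lemma card_neighborFinset_erase_le_one {V : Type*} [DecidableEq V] (G : SimpleGraph V)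
    [G.LocallyFinite] {a b : V} (h : G.Adj a b) (ha : G.degree a ≤ 2) :
    #((G.neighborFinset a).erase b) ≤ 1 := by
  rw [card_erase_of_mem (by simpa using h), card_neighborFinset_eq_degree]
  omega

lemma adj_iff_of_neighborSet_eq {V : Type*} {G : SimpleGraph V} {u x y : V} {n : ℕ}
    {v : Fin n → V} (hnbhd : G.neighborSet u = Set.range v ∪ {x, y}) {z : V} :
    G.Adj u z ↔ z = x ∨ z = y ∨ ∃ i, v i = z := by
  rw [← mem_neighborSet, hnbhd]
  simp

section Configuration

variable {V : Type*} [Fintype V] [DecidableEq V] {G : SimpleGraph V} [DecidableRel G.Adj]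
  {u x y : V} {n : ℕ} {v : Fin n → V}

lemma card_square_neighborFinset_sdiff_center_le [DecidableRel G.square.Adj]
    (hnbhd : G.neighborSet u = Set.range v ∪ {x, y})
    (hv : ∀ i, G.degree (v i) ≤ 2) :
    #(G.square.neighborFinset u \ insert u (univ.image v)) ≤ n + G.degree x + G.degree y := by
  have hsub : G.square.neighborFinset u \ insert u (univ.image v) ⊆
      insert x ((G.neighborFinset x).erase u) ∪ insert y ((G.neighborFinset y).erase u) ∪
        univ.biUnion fun i => (G.neighborFinset (v i)).erase u := by
    intro b hb
    simp only [mem_sdiff, mem_neighborFinset, mem_insert, mem_image, mem_univ, true_and,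
      not_or] at hb
    obtain ⟨⟨hub, hdir | ⟨z, huz, hzb⟩⟩, hbu, hbv⟩ := hb
    all_goals simp only [mem_union, mem_insert, mem_erase, mem_neighborFinset, mem_biUnion,
      mem_univ, true_and]
    · rcases (adj_iff_of_neighborSet_eq hnbhd).1 hdir with rfl | rfl | hb
      exacts [by simp, by simp, absurd hb hbv]
    · rcases (adj_iff_of_neighborSet_eq hnbhd).1 huz with rfl | rfl | ⟨i, rfl⟩
      exacts [by simp [hbu, hzb], by simp [hbu, hzb], Or.inr ⟨i, hbu, hzb⟩]
  have hx := card_insert_erase_neighborFinset G ((adj_iff_of_neighborSet_eq hnbhd).2 (.inl rfl))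
  have hy := card_insert_erase_neighborFinset G
    ((adj_iff_of_neighborSet_eq hnbhd).2 (.inr (.inl rfl)))
  have hvs := card_biUnion_le_card_mul univ (fun i => (G.neighborFinset (v i)).erase u) 1
    fun i _ => card_neighborFinset_erase_le_one G
      ((adj_iff_of_neighborSet_eq hnbhd).2 (.inr (.inr ⟨i, rfl⟩))).symm (hv i)
  calc _ ≤ _ := card_le_card hsub
    _ ≤ _ := card_union_le _ _
    _ ≤ _ := by grw [card_union_le]
    _ ≤ G.degree x + G.degree y + n * 1 := by rw [hx, hy]; simpa using hvs
    _ = _ := by ring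

lemma card_square_neighborFinset_sdiff_leaf_le [DecidableRel G.square.Adj]
    (hnbhd : G.neighborSet u = Set.range v ∪ {x, y})
    {M : ℕ} (i : Fin n) (hvi : G.degree (v i) ≤ 2)
    (hw : ∀ w, G.Adj (v i) w → w ≠ u → G.degree w ≤ M) :
    #(G.square.neighborFinset (v i) \ insert u (univ.image v)) ≤ M + 2 := by
  have hsub : G.square.neighborFinset (v i) \ insert u (univ.image v) ⊆
      ((G.neighborFinset (v i)).erase u).biUnion
        (fun w => insert w ((G.neighborFinset w).erase (v i))) ∪ {x, y} := by
    intro b hb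
    simp only [mem_sdiff, mem_neighborFinset, mem_insert, mem_image, mem_univ, true_and,
      not_or] at hb
    obtain ⟨⟨hvb, hdir | ⟨z, hvz, hzb⟩⟩, hbu, hbv⟩ := hb
    all_goals simp only [mem_union, mem_insert, mem_erase, mem_neighborFinset, mem_biUnion,
      mem_singleton]
    · exact Or.inl ⟨b, ⟨hbu, hdir⟩, Or.inl rfl⟩
    · rcases eq_or_ne z u with rfl | hzu
      · rcases (adj_iff_of_neighborSet_eq hnbhd).1 hzb with rfl | rfl | hb
        exacts [by simp, by simp, absurd hb hbv]
      · exact Or.inl ⟨z, ⟨hzu, hvz⟩, Or.inr ⟨hvb.symm, hzb⟩⟩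
  have hws := card_biUnion_le_card_mul ((G.neighborFinset (v i)).erase u)
    (fun w => insert w ((G.neighborFinset w).erase (v i))) M fun w hw' => by
      obtain ⟨hwu, hvw⟩ := mem_erase.1 hw'
      rw [mem_neighborFinset] at hvw
      exact (card_insert_erase_neighborFinset G hvw).trans_le (hw w hvw hwu)
  have hu := card_neighborFinset_erase_le_one G
    ((adj_iff_of_neighborSet_eq hnbhd).2 (.inr (.inr ⟨i, rfl⟩))).symm hvi
  calc _ ≤ _ := card_le_card hsub
    _ ≤ _ := card_union_le _ _
    _ ≤ 1 * M + 2 := add_le_add (hws.trans (Nat.mul_le_mul_right M hu)) card_le_two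
    _ = _ := by ring

lemma exists_coloring_off_center (hnbhd : G.neighborSet u = Set.range v ∪ {x, y}) {m : ℕ}
    (i : Fin n) (hvi : G.degree (v i) ≤ 2)
    (hcol : ((⊤ : G.Subgraph).deleteVerts {v i}).coe.square.IsListColorable m)
    (L : V → Finset ℕ) (hL : ∀ a, #(L a) = m) :
    ∃ c : V → ℕ, (∀ a, a ∉ insert u (univ.image v) → c a ∈ L a) ∧
      ∀ a b, G.square.Adj a b → a ∉ insert u (univ.image v) → b ∉ insert u (univ.image v) →
        c a ≠ c b := by
  obtain ⟨c, hcL, hc⟩ := exists_coloring_of_deleteVerts G (v i) hcol L hL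
  have hvS : v i ∈ insert u (univ.image v) := mem_insert_of_mem (mem_image_of_mem v (mem_univ i))
  refine ⟨c, fun a ha => hcL a (ne_of_mem_of_not_mem hvS ha).symm, fun a b h ha hb => ?_⟩
  refine hc a b h (ne_of_mem_of_not_mem hvS ha).symm (ne_of_mem_of_not_mem hvS hb).symm ?_
  -- `v i` has at most one neighbour besides `u`
  rintro ⟨hva, hvb⟩
  have hu : G.Adj (v i) u := ((adj_iff_of_neighborSet_eq hnbhd).2 (.inr (.inr ⟨i, rfl⟩))).symm
  refine h.ne (card_le_one.1 (card_neighborFinset_erase_le_one G hu hvi) a ?_ b ?_) <;>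
    simp_all

theorem statement6_general (k M : ℕ) (hkM : 2 * M ≤ k)
    (V : Type) [Fintype V] (G : SimpleGraph V)
    (hmin : ∀ H : G.Subgraph, H ≠ ⊤ → ((H.coe).square).IsListColorable (k + 1))
    (u x y : V) (hu3 : 3 ≤ deg G u) (huM : deg G u ≤ M)
    (v : Fin (deg G u - 2) → V)
    (hnbhd : G.neighborSet u = Set.range v ∪ {x, y})
    (hvdeg : ∀ i, deg G (v i) = 2)
    (hw : ∀ i w, G.Adj (v i) w → w ≠ u → deg G w ≤ M)
    (hxyd : deg G x + deg G y + M ≤ k + 2) :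
    (G.square).IsListColorable (k + 1) := by
  classical
  intro L hL
  simp only [deg_eq_degree] at hvdeg hw hxyd
  have hv : ∀ i, G.degree (v i) ≤ 2 := fun i => (hvdeg i).le
  let i₀ : Fin (deg G u - 2) := ⟨0, by omega⟩
  have hdel : (⊤ : G.Subgraph).deleteVerts {v i₀} ≠ ⊤ := fun h => by
    simpa using congrArg (v i₀ ∈ ·.verts) h
  let s : Fin (deg G u - 2 + 1) → V := Fin.cons u v
  have hS : ∀ b, b ∉ Set.range s ↔ b ∉ insert u (univ.image v) := by simp [s]
  obtain ⟨c₀, hc₀L, hc₀⟩ := exists_coloring_off_center hnbhd i₀ (hv i₀) (hmin _ hdel) L hL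
  refine exists_listColoring_extend G.square L s
    (fun i => G.square.neighborFinset (s i) \ insert u (univ.image v))
    (fun a ha => hc₀L a ((hS a).1 ha)) (fun a b h ha hb => hc₀ a b h ((hS a).1 ha) ((hS b).1 hb))
    (fun i b h hb => mem_sdiff.2 ⟨(mem_neighborFinset _ _ _).2 h, (hS b).1 hb⟩) fun i => ?_
  cases i using Fin.cases with
  | zero =>
    have := card_square_neighborFinset_sdiff_center_le hnbhd hv
    change #(G.square.neighborFinset u \ _) + 0 < #(L u)
    rw [hL]
    omega
  | succ j =>
    have := card_square_neighborFinset_sdiff_leaf_le hnbhd j (hv j) (hw j)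
    change #(G.square.neighborFinset (v j) \ _) + (j + 1) < #(L (v j))
    rw [hL]
    omega

theorem statement6 (k M : ℕ) (hkM : 2 * M ≤ k)
    (V : Type) [Fintype V] (G : SimpleGraph V)
    (hΔ : maxDeg G ≤ k)
    (hmin : ∀ H : G.Subgraph, H ≠ ⊤ → ((H.coe).square).IsListColorable (k + 1))
    (u x y : V) (hu3 : 3 ≤ deg G u) (huM : deg G u ≤ M)
    (v : Fin (deg G u - 2) → V)
    (hvinj : Function.Injective v)
    (hxy : x ≠ y) (hvx : ∀ i, v i ≠ x) (hvy : ∀ i, v i ≠ y)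
    (hnbhd : G.neighborSet u = Set.range v ∪ {x, y})
    (hvdeg : ∀ i, deg G (v i) = 2)
    (hw : ∀ i w, G.Adj (v i) w → w ≠ u → deg G w ≤ M)
    (hxyd : deg G x + deg G y + M ≤ k + 2) :
    (G.square).IsListColorable (k + 1) :=
  statement6_general k M hkM V G hmin u x y hu3 huM v hnbhd hvdeg hw hxyd
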